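/- Let 𝔄 = (A, Att) be a SETAF and P_𝔄 its associated NLP. Then: (1) L is a grounded labelling of 𝔄 iff L2I_𝔄(L) is a well-founded model of P_𝔄; (2) L is a preferred labelling of 𝔄 iff L2I_𝔄(L) is a regular model of P_𝔄; (3) L is a stable labelling of 𝔄 iff L2I_𝔄(L) is a stable model of P_𝔄; (4) L is a semi-stable labelling of 𝔄 iff L2I_𝔄(L) is an L-stable model of P_𝔄. -/
import Mathlib


/-- A rule of a normal logic program:
`head ← bodyPos, not bodyNeg`. -/
structure Rule (α : Type) where
  head : α
  bodyPos : Finset α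
  bodyNeg : Finset α
deriving DecidableEq

/-- A normal logic program (NLP): a finite set of rules. -/
abbrev NLP (α : Type) := Finset (Rule α)

variable {α : Type} [DecidableEq α]

/-- The atoms occurring in a rule. -/
def Rule.atoms (r : Rule α) : Finset α :=
  insert r.head (r.bodyPos ∪ r.bodyNeg)

/-- The Herbrand base of a program: all atoms occurring in it. -/
def HB (P : NLP α) : Finset α := P.sup Rule.atoms

/-- A three-valued interpretation, given by its sets of true and false atoms. -/
structure Interp (α : Type) where
  T : Set α
  F : Set α

/-- `I` is a 3-valued interpretation over the Herbrand base `H`. -/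
def IsInterp (H : Finset α) (I : Interp α) : Prop :=
  I.T ⊆ ↑H ∧ I.F ⊆ ↑H ∧ Disjoint I.T I.F

/-- A rule of a positive program obtained as a reduct; `hasU` records whether
the special atom `u` (undefined in every interpretation) occurs in its body. -/
structure PosRule (α : Type) where
  head : α
  bodyPos : Finset α
  hasU : Prop

/-- The reduct `P/I`: delete every rule whose negative body meets `I.T`,
delete each `not b` with `b ∈ I.F`, and replace the remaining negative
literals by the special atom `u`. -/
def reduct (P : NLP α) (I : Interp α) : Set (PosRule α) :=
  { q | ∃ r ∈ P, (∀ b ∈ r.bodyNeg, b ∉ I.T) ∧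
        q.head = r.head ∧ q.bodyPos = r.bodyPos ∧
        (q.hasU ↔ ∃ b ∈ r.bodyNeg, b ∉ I.F) }

/-- The `Ψ` operator of a positive program `Q` relative to the Herbrand base
`H`; the special atom `u` is neither true nor false in any interpretation. -/
def PsiOp (H : Finset α) (Q : Set (PosRule α)) (J : Interp α) : Interp α where
  T := { c | c ∈ H ∧ ∃ q ∈ Q, q.head = c ∧ ¬ q.hasU ∧ ∀ a ∈ q.bodyPos, a ∈ J.T }
  F := { c | c ∈ H ∧ ∀ q ∈ Q, q.head = c → ∃ a ∈ q.bodyPos, a ∈ J.F }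

/-- Iteration of `Ψ` starting from `⟨∅, H⟩`. -/
def PsiIter (H : Finset α) (Q : Set (PosRule α)) : ℕ → Interp α
  | 0 => ⟨∅, ↑H⟩
  | n + 1 => PsiOp H Q (PsiIter H Q n)

/-- `Ω_P(I)`: the least three-valued model of the reduct `P/I`,
obtained as the `ω`-iteration of `Ψ`. -/
def OmegaOp (H : Finset α) (P : NLP α) (I : Interp α) : Interp α where
  T := ⋃ n, (PsiIter H (reduct P I) n).T
  F := ⋂ n, (PsiIter H (reduct P I) n).F

/-- `I` is a partial stable model of `P` (over Herbrand base `H`). -/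
def IsPSModel (H : Finset α) (P : NLP α) (I : Interp α) : Prop :=
  IsInterp H I ∧ OmegaOp H P I = I

/-- Well-founded model: a partial stable model with `⊆`-minimal true part. -/
def IsWFModel (H : Finset α) (P : NLP α) (I : Interp α) : Prop :=
  IsPSModel H P I ∧ ∀ J, IsPSModel H P J → ¬ J.T ⊂ I.T

/-- Regular model: a partial stable model with `⊆`-maximal true part. -/
def IsRegularModel (H : Finset α) (P : NLP α) (I : Interp α) : Prop :=
  IsPSModel H P I ∧ ∀ J, IsPSModel H P J → ¬ I.T ⊂ J.T

/-- Stable model: a partial stable model with `T ∪ F = H`. -/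
def IsStableModel (H : Finset α) (P : NLP α) (I : Interp α) : Prop :=
  IsPSModel H P I ∧ I.T ∪ I.F = ↑H

/-- L-stable model: a partial stable model with `⊆`-maximal `T ∪ F`. -/
def IsLStableModel (H : Finset α) (P : NLP α) (I : Interp α) : Prop :=
  IsPSModel H P I ∧ ∀ J, IsPSModel H P J → ¬ (I.T ∪ I.F) ⊂ (J.T ∪ J.F)

/-- `IsStatement P c V R`: there is a statement of `P` with conclusion `c`,
vulnerabilities `V` and rules `R`.  A statement is built from a rule
`r = c ← a₁,…,a_m, not b₁,…,not b_n ∈ P` together with statements `sᵢ` for the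
positive body atoms `aᵢ` (with `r` not among their rules); its vulnerabilities
are `Vul(s₁) ∪ … ∪ Vul(s_m) ∪ {b₁,…,b_n}` and its rules are
`Rules(s₁) ∪ … ∪ Rules(s_m) ∪ {r}`. -/
inductive IsStatement (P : NLP α) : α → Finset α → Finset (Rule α) → Prop where
  | mk (r : Rule α) (hr : r ∈ P) (v : α → Finset α) (ρ : α → Finset (Rule α))
      (hsub : ∀ a ∈ r.bodyPos, IsStatement P a (v a) (ρ a))
      (hnr : ∀ a ∈ r.bodyPos, r ∉ ρ a) :
      IsStatement P r.head (r.bodyPos.biUnion v ∪ r.bodyNeg)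
        (insert r (r.bodyPos.biUnion ρ))

/-- `c` is an argument of `P`: it is the conclusion of some statement. -/
def IsArg (P : NLP α) (c : α) : Prop := ∃ V R, IsStatement P c V R

open Classical in
/-- The set `A_P` of arguments of `P`. -/
noncomputable def argsOf (P : NLP α) : Finset α := (HB P).filter (IsArg P)

/-- `B` meets every vulnerability set of `a` in `P`. -/
def HitsVul (P : NLP α) (B : Finset α) (a : α) : Prop :=
  ∀ V R, IsStatement P a V R → ∃ b ∈ B, b ∈ V

/-- A SETAF: a finite set of arguments and an attack relation between
finite sets of arguments and arguments. -/
structure SETAF (α : Type) where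
  args : Finset α
  att : Finset α → α → Prop

/-- Well-formedness of a SETAF: attackers are nonempty sets of arguments
attacking arguments, and attacking sets are `⊆`-minimal. -/
def SETAF.Wf (S : SETAF α) : Prop :=
  (∀ B a, S.att B a → B.Nonempty ∧ B ⊆ S.args ∧ a ∈ S.args) ∧
  (∀ B a, S.att B a → ∀ B', B' ⊂ B → ¬ S.att B' a)

/-- The SETAF `𝔄_P` associated with an NLP `P`: its arguments are the
conclusions of the statements of `P`, and `B` attacks `a` iff `B` is a
`⊆`-minimal set of arguments meeting every vulnerability set of `a`. -/
noncomputable def setafOf (P : NLP α) : SETAF α where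
  args := argsOf P
  att := fun B a =>
    B ⊆ argsOf P ∧ a ∈ argsOf P ∧ HitsVul P B a ∧ ∀ B', B' ⊂ B → ¬ HitsVul P B' a

/-- Labels for arguments. -/
inductive Lab : Type
  | inn | out | und
deriving DecidableEq

/-- `in(L)`. -/
def labIn (S : SETAF α) (L : α → Lab) : Set α := { a | a ∈ S.args ∧ L a = Lab.inn }

/-- `out(L)`. -/
def labOut (S : SETAF α) (L : α → Lab) : Set α := { a | a ∈ S.args ∧ L a = Lab.out }

/-- `undec(L)`. -/
def labUnd (S : SETAF α) (L : α → Lab) : Set α := { a | a ∈ S.args ∧ L a = Lab.und }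

/-- Admissible labelling. -/
def AdmissibleLab (S : SETAF α) (L : α → Lab) : Prop :=
  ∀ a ∈ S.args,
    (L a = Lab.inn → ∀ B, S.att B a → ∃ b ∈ B, L b = Lab.out) ∧
    (L a = Lab.out → ∃ B, S.att B a ∧ ∀ b ∈ B, L b = Lab.inn)

/-- Complete labelling. -/
def CompleteLab (S : SETAF α) (L : α → Lab) : Prop :=
  AdmissibleLab S L ∧
  ∀ a ∈ S.args, L a = Lab.und →
    (∃ B, S.att B a ∧ ∀ b ∈ B, L b ≠ Lab.out) ∧
    (∀ B, S.att B a → ∃ b ∈ B, L b ≠ Lab.inn)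

/-- Grounded labelling: complete with `⊆`-minimal `in(L)`. -/
def GroundedLab (S : SETAF α) (L : α → Lab) : Prop :=
  CompleteLab S L ∧ ∀ L', CompleteLab S L' → ¬ labIn S L' ⊂ labIn S L

/-- Preferred labelling: complete with `⊆`-maximal `in(L)`. -/
def PreferredLab (S : SETAF α) (L : α → Lab) : Prop :=
  CompleteLab S L ∧ ∀ L', CompleteLab S L' → ¬ labIn S L ⊂ labIn S L'

/-- Stable labelling: complete with `undec(L) = ∅`. -/
def StableLab (S : SETAF α) (L : α → Lab) : Prop :=
  CompleteLab S L ∧ labUnd S L = ∅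

/-- Semi-stable labelling: complete with `⊆`-minimal `undec(L)`. -/
def SemiStableLab (S : SETAF α) (L : α → Lab) : Prop :=
  CompleteLab S L ∧ ∀ L', CompleteLab S L' → ¬ labUnd S L' ⊂ labUnd S L

/-- `L2I_P`: the interpretation associated with a labelling of `𝔄_P`. -/
def L2I (P : NLP α) (L : α → Lab) : Interp α where
  T := { c | c ∈ HB P ∧ c ∈ argsOf P ∧ L c = Lab.inn }
  F := { c | c ∈ HB P ∧ (c ∉ argsOf P ∨ (c ∈ argsOf P ∧ L c = Lab.out)) }

open Classical in
/-- `I2L`: the labelling associated with an interpretation (meaningful on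
the arguments). -/
noncomputable def I2L (I : Interp α) : α → Lab := fun c =>
  if c ∈ I.T then Lab.inn else if c ∈ I.F then Lab.out else Lab.und

/-- `L2I_𝔄`: the interpretation `⟨in(L), out(L)⟩` associated with a labelling
of a SETAF `𝔄`. -/
def L2Iset (S : SETAF α) (L : α → Lab) : Interp α := ⟨labIn S L, labOut S L⟩

/-- `V` meets every attacker of `a` in `S`. -/
def HitsAtt (S : SETAF α) (a : α) (V : Finset α) : Prop :=
  ∀ B, S.att B a → ∃ b ∈ B, b ∈ V

/-- `V ∈ V_a`: a `⊆`-minimal set of arguments meeting every attacker of `a`. -/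
def MemVa (S : SETAF α) (a : α) (V : Finset α) : Prop :=
  V ⊆ S.args ∧ HitsAtt S a V ∧ ∀ V', V' ⊂ V → ¬ HitsAtt S a V'

open Classical in
/-- The NLP `P_𝔄` associated with a SETAF `𝔄`:
`{ a ← not b₁,…,not b_n | a ∈ A, {b₁,…,b_n} ∈ V_a }`. -/
noncomputable def nlpOf (S : SETAF α) : NLP α :=
  ((S.args ×ˢ S.args.powerset).filter (fun p => MemVa S p.1 p.2)).image
    (fun p => { head := p.1, bodyPos := ∅, bodyNeg := p.2 })

/-- Redundancy-Free Atomic Logic Program: every rule is atomic (no positive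
body), every atom is a head, and no rule's negative body strictly contains
that of another rule with the same head. -/
def IsRFALP (P : NLP α) : Prop :=
  (∀ r ∈ P, r.bodyPos = ∅) ∧
  HB P = P.image Rule.head ∧
  ∀ r ∈ P, ∀ r' ∈ P, r'.head = r.head → ¬ r'.bodyNeg ⊂ r.bodyNeg

/-- Unfolding: replace a rule `c ← a, a₁,…,a_m, not b₁,…,not b_n` by all rules
obtained by resolving `a` against the rules of the program with head `a`. -/
def StepU (P₁ P₂ : NLP α) : Prop :=
  ∃ r ∈ P₁, ∃ a ∈ r.bodyPos,
    P₂ = P₁.erase r ∪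
      (P₁.filter (fun r' => r'.head = a)).image
        (fun r' => { head := r.head,
                     bodyPos := r'.bodyPos ∪ r.bodyPos.erase a,
                     bodyNeg := r'.bodyNeg ∪ r.bodyNeg })

/-- Elimination of tautologies: delete a rule whose head occurs in its
positive body. -/
def StepT (P₁ P₂ : NLP α) : Prop :=
  ∃ r ∈ P₁, r.head ∈ r.bodyPos ∧ P₂ = P₁.erase r

/-- Positive reduction: delete a literal `not b` from the body of a rule,
where `b` is not the head of any rule of the program. -/
def StepP (P₁ P₂ : NLP α) : Prop :=
  ∃ r ∈ P₁, ∃ b ∈ r.bodyNeg, (∀ r' ∈ P₁, r'.head ≠ b) ∧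
    P₂ = insert { head := r.head, bodyPos := r.bodyPos,
                  bodyNeg := r.bodyNeg.erase b } (P₁.erase r)

/-- Elimination of non-minimal rules: delete a rule subsumed by a distinct
rule with the same head and smaller bodies. -/
def StepM (P₁ P₂ : NLP α) : Prop :=
  ∃ r ∈ P₁, ∃ r' ∈ P₁, r ≠ r' ∧ r'.head = r.head ∧
    r'.bodyPos ⊆ r.bodyPos ∧ r'.bodyNeg ⊆ r.bodyNeg ∧ P₂ = P₁.erase r

/-- `↦_UTPM`: the union of the four transformations. -/
def StepUTPM (P₁ P₂ : NLP α) : Prop :=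
  StepU P₁ P₂ ∨ StepT P₁ P₂ ∨ StepP P₁ P₂ ∨ StepM P₁ P₂

/-- `P` is irreducible w.r.t. `↦_UTPM`: there is no `P' ≠ P` with
`P ↦_UTPM P'`. -/
def UTPMIrreducible (P : NLP α) : Prop :=
  ¬ ∃ P', StepUTPM P P' ∧ P' ≠ P

section AuxProofs

lemma interp_eq {I J : Interp α} (h1 : I.T = J.T) (h2 : I.F = J.F) : I = J := by
  cases I; cases J; simp_all

lemma mem_nlpOf {S : SETAF α} {r : Rule α} :
    r ∈ nlpOf S ↔ r.head ∈ S.args ∧ r.bodyPos = ∅ ∧ MemVa S r.head r.bodyNeg := by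
  classical
  unfold nlpOf
  simp only [Finset.mem_image, Finset.mem_filter, Finset.mem_product, Finset.mem_powerset]
  constructor
  · rintro ⟨⟨a, V⟩, ⟨⟨ha, hV⟩, hm⟩, rfl⟩
    exact ⟨ha, rfl, hm⟩
  · rintro ⟨ha, hp, hm⟩
    exact ⟨(r.head, r.bodyNeg), ⟨⟨ha, hm.1⟩, hm⟩, by cases r; simp_all⟩

lemma omega_spec {S : SETAF α} {I : Interp α} (hdis : Disjoint I.T I.F) :
    (OmegaOp S.args (nlpOf S) I).T
      = {c | c ∈ S.args ∧ ∃ V, MemVa S c V ∧ ↑V ⊆ I.F} ∧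
    (OmegaOp S.args (nlpOf S) I).F
      = {c | c ∈ S.args ∧ ∀ V, MemVa S c V → ∃ b ∈ V, b ∈ I.T} := by
  classical
  set Q : Set (PosRule α) := reduct (nlpOf S) I with hQdef
  have hbody : ∀ q ∈ Q, q.bodyPos = (∅ : Finset α) := by
    rintro q ⟨r, hr, _, _, hbp, _⟩
    rw [hbp, (mem_nlpOf.1 hr).2.1]
  have hQex : ∀ c : α, (∃ q ∈ Q, q.head = c ∧ ¬ q.hasU) ↔
      (c ∈ S.args ∧ ∃ V, MemVa S c V ∧ ↑V ⊆ I.F) := by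
    intro c
    constructor
    · rintro ⟨q, ⟨r, hr, hsurv, hhead, hbp, hU⟩, hqc, hnU⟩
      obtain ⟨hra, _, hmv⟩ := mem_nlpOf.1 hr
      have hVF : (↑r.bodyNeg : Set α) ⊆ I.F := by
        intro b hb
        by_contra hbF
        exact hnU (hU.2 ⟨b, Finset.mem_coe.1 hb, hbF⟩)
      exact ⟨hqc ▸ hhead ▸ hra, r.bodyNeg, hqc ▸ hhead ▸ hmv, hVF⟩
    · rintro ⟨hc, V, hmv, hVF⟩
      refine ⟨⟨c, ∅, ∃ b ∈ V, b ∉ I.F⟩, ⟨⟨c, ∅, V⟩, ?_, ?_, rfl, rfl, Iff.rfl⟩, rfl, ?_⟩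
      · exact mem_nlpOf.2 ⟨hc, rfl, hmv⟩
      · intro b hb
        exact Set.disjoint_right.1 hdis (hVF (Finset.mem_coe.2 hb))
      · rintro ⟨b, hb, hbF⟩
        exact hbF (hVF (Finset.mem_coe.2 hb))
  have hQall : ∀ c : α, c ∈ S.args →
      ((∀ q ∈ Q, q.head ≠ c) ↔ (∀ V, MemVa S c V → ∃ b ∈ V, b ∈ I.T)) := by
    intro c hc
    constructor
    · intro h V hmv
      by_contra hn
      push_neg at hn
      refine h ⟨c, ∅, ∃ b ∈ V, b ∉ I.F⟩
        ⟨⟨c, ∅, V⟩, mem_nlpOf.2 ⟨hc, rfl, hmv⟩, ?_, rfl, rfl, Iff.rfl⟩ rfl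
      intro b hb
      exact hn b hb
    · rintro h q ⟨r, hr, hsurv, hhead, _, _⟩ hqc
      obtain ⟨_, _, hmv⟩ := mem_nlpOf.1 hr
      obtain ⟨b, hb, hbT⟩ := h r.bodyNeg (by rw [← hqc, hhead]; exact hmv)
      exact hsurv b hb hbT
  have hT1 : ∀ (J : Interp α) (c : α),
      c ∈ (PsiOp S.args Q J).T ↔ (c ∈ S.args ∧ ∃ q ∈ Q, q.head = c ∧ ¬ q.hasU) := by
    intro J c
    constructor
    · rintro ⟨hc, q, hq, hh, hu, _⟩
      exact ⟨hc, q, hq, hh, hu⟩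
    · rintro ⟨hc, q, hq, hh, hu⟩
      refine ⟨hc, q, hq, hh, hu, ?_⟩
      intro a ha
      rw [hbody q hq] at ha
      exact absurd ha (Finset.notMem_empty a)
  have hF1 : ∀ (J : Interp α) (c : α),
      c ∈ (PsiOp S.args Q J).F ↔ (c ∈ S.args ∧ ∀ q ∈ Q, q.head ≠ c) := by
    intro J c
    constructor
    · rintro ⟨hc, h⟩
      refine ⟨hc, fun q hq hqc => ?_⟩
      obtain ⟨a, ha, _⟩ := h q hq hqc
      rw [hbody q hq] at ha
      exact absurd ha (Finset.notMem_empty a)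
    · rintro ⟨hc, h⟩
      exact ⟨hc, fun q hq hqc => absurd hqc (h q hq)⟩
  constructor
  · ext c
    simp only [OmegaOp, Set.mem_iUnion, Set.mem_setOf_eq]
    constructor
    · rintro ⟨n, hn⟩
      cases n with
      | zero => exact absurd hn (by simp [PsiIter])
      | succ m =>
        have := (hT1 (PsiIter S.args Q m) c).1 hn
        exact ⟨this.1, ((hQex c).1 this.2).2⟩
    · rintro ⟨hc, V, hmv, hVF⟩
      exact ⟨1, (hT1 (PsiIter S.args Q 0) c).2 ⟨hc, (hQex c).2 ⟨hc, V, hmv, hVF⟩⟩⟩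
  · ext c
    simp only [OmegaOp, Set.mem_iInter, Set.mem_setOf_eq]
    constructor
    · intro h
      have h1 := (hF1 (PsiIter S.args Q 0) c).1 (h 1)
      exact ⟨h1.1, (hQall c h1.1).1 h1.2⟩
    · rintro ⟨hc, h⟩ n
      cases n with
      | zero => simpa [PsiIter] using hc
      | succ m => exact (hF1 (PsiIter S.args Q m) c).2 ⟨hc, (hQall c hc).2 h⟩

lemma exists_minHit {S : SETAF α} (a : α) :
    ∀ V : Finset α, V ⊆ S.args → HitsAtt S a V → ∃ V', V' ⊆ V ∧ MemVa S a V' := by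
  intro V
  induction V using Finset.strongInduction with
  | _ V ih =>
    intro hsub hhit
    by_cases h : ∃ V'' ⊂ V, HitsAtt S a V''
    · obtain ⟨V'', hss, hh⟩ := h
      obtain ⟨V', h1, h2⟩ := ih V'' hss (hss.subset.trans hsub) hh
      exact ⟨V', h1.trans hss.subset, h2⟩
    · exact ⟨V, le_refl _, hsub, hhit, fun V'' hss hh => h ⟨V'', hss, hh⟩⟩

lemma hitF {S : SETAF α} (hS : S.Wf) (a : α) (F : Set α) :
    (∃ V, MemVa S a V ∧ ↑V ⊆ F) ↔ ∀ B, S.att B a → ∃ b ∈ B, b ∈ F := by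
  classical
  constructor
  · rintro ⟨V, hV, hVF⟩ B hB
    obtain ⟨b, hbB, hbV⟩ := hV.2.1 B hB
    exact ⟨b, hbB, hVF (Finset.mem_coe.2 hbV)⟩
  · intro h
    have hhit : HitsAtt S a (S.args.filter (fun x => x ∈ F)) := by
      intro B hB
      obtain ⟨b, hbB, hbF⟩ := h B hB
      exact ⟨b, hbB, Finset.mem_filter.2 ⟨(hS.1 B a hB).2.1 hbB, hbF⟩⟩
    obtain ⟨V', hsub, hmv⟩ := exists_minHit a _ (Finset.filter_subset _ _) hhit
    refine ⟨V', hmv, fun x hx => ?_⟩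
    exact (Finset.mem_filter.1 (hsub (Finset.mem_coe.1 hx))).2

lemma hitT {S : SETAF α} (hS : S.Wf) (a : α) (T : Set α) :
    (∀ V, MemVa S a V → ∃ b ∈ V, b ∈ T) ↔ ∃ B, S.att B a ∧ ↑B ⊆ T := by
  classical
  constructor
  · intro h
    by_contra hB
    push_neg at hB
    have hhit : HitsAtt S a (S.args.filter (fun x => x ∉ T)) := by
      intro B hB'
      obtain ⟨b, hbB, hbT⟩ := Set.not_subset.1 (hB B hB')
      exact ⟨b, hbB, Finset.mem_filter.2 ⟨(hS.1 B a hB').2.1 hbB, hbT⟩⟩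
    obtain ⟨V', hsub, hmv⟩ := exists_minHit a _ (Finset.filter_subset _ _) hhit
    obtain ⟨b, hbV, hbT⟩ := h V' hmv
    exact (Finset.mem_filter.1 (hsub hbV)).2 hbT
  · rintro ⟨B, hB, hBT⟩ V hV
    obtain ⟨b, hbB, hbV⟩ := hV.2.1 B hB
    exact ⟨b, hbV, hBT (Finset.mem_coe.2 hbB)⟩

lemma interp_L2I (S : SETAF α) (L : α → Lab) : IsInterp S.args (L2Iset S L) := by
  refine ⟨fun a ha => ha.1, fun a ha => ha.1, Set.disjoint_left.2 ?_⟩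
  rintro a ⟨_, h1⟩ ⟨_, h2⟩
  rw [h1] at h2
  exact Lab.noConfusion h2

lemma complete_iff {S : SETAF α} (hS : S.Wf) (L : α → Lab) :
    CompleteLab S L ↔ IsPSModel S.args (nlpOf S) (L2Iset S L) := by
  have hint := interp_L2I S L
  set I : Interp α := L2Iset S L with hIdef
  have hspec := omega_spec (S := S) (I := I) hint.2.2
  have hMemT : ∀ a : α, a ∈ I.T ↔ (a ∈ S.args ∧ L a = Lab.inn) := fun a => Iff.rfl
  have hMemF : ∀ a : α, a ∈ I.F ↔ (a ∈ S.args ∧ L a = Lab.out) := fun a => Iff.rfl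
  have incompat : ∀ a : α,
      (∀ B, S.att B a → ∃ b ∈ B, b ∈ I.F) → (∃ B, S.att B a ∧ ↑B ⊆ I.T) → False := by
    rintro a hT ⟨B, hB, hBin⟩
    obtain ⟨b, hbB, hbout⟩ := hT B hB
    have hbin : b ∈ I.T := hBin (Finset.mem_coe.2 hbB)
    exact Set.disjoint_left.1 hint.2.2 hbin hbout
  have key : CompleteLab S L ↔ ∀ a ∈ S.args,
      ((L a = Lab.inn ↔ ∀ B, S.att B a → ∃ b ∈ B, b ∈ I.F) ∧
       (L a = Lab.out ↔ ∃ B, S.att B a ∧ ↑B ⊆ I.T)) := by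
    constructor
    · rintro ⟨hadm, hund⟩ a ha
      have hcT : L a = Lab.inn → ∀ B, S.att B a → ∃ b ∈ B, b ∈ I.F := by
        intro hin B hB
        obtain ⟨b, hbB, hbo⟩ := (hadm a ha).1 hin B hB
        exact ⟨b, hbB, (hMemF b).2 ⟨(hS.1 B a hB).2.1 hbB, hbo⟩⟩
      have hcF : L a = Lab.out → ∃ B, S.att B a ∧ ↑B ⊆ I.T := by
        intro hout
        obtain ⟨B, hB, hall⟩ := (hadm a ha).2 hout
        exact ⟨B, hB, fun b hb =>
          (hMemT b).2 ⟨(hS.1 B a hB).2.1 (Finset.mem_coe.1 hb), hall b (Finset.mem_coe.1 hb)⟩⟩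
      refine ⟨⟨hcT, ?_⟩, ⟨hcF, ?_⟩⟩
      · intro hT
        cases hLa : L a with
        | inn => rfl
        | out => exact absurd (hcF hLa) (fun h => incompat a hT h)
        | und =>
          obtain ⟨⟨B, hB, hno⟩, _⟩ := hund a ha hLa
          obtain ⟨b, hbB, hbF⟩ := hT B hB
          exact absurd ((hMemF b).1 hbF).2 (hno b hbB)
      · intro hF
        cases hLa : L a with
        | out => rfl
        | inn => exact absurd (hcT hLa) (fun h => incompat a h hF)
        | und =>
          obtain ⟨_, h2⟩ := hund a ha hLa
          obtain ⟨B, hB, hBT⟩ := hF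
          obtain ⟨b, hbB, hbni⟩ := h2 B hB
          exact absurd ((hMemT b).1 (hBT (Finset.mem_coe.2 hbB))).2 hbni
    · intro h
      constructor
      · intro a ha
        refine ⟨fun hin B hB => ?_, fun hout => ?_⟩
        · obtain ⟨b, hbB, hbF⟩ := ((h a ha).1.1 hin) B hB
          exact ⟨b, hbB, ((hMemF b).1 hbF).2⟩
        · obtain ⟨B, hB, hBT⟩ := (h a ha).2.1 hout
          exact ⟨B, hB, fun b hb => ((hMemT b).1 (hBT (Finset.mem_coe.2 hb))).2⟩
      · intro a ha hu
        constructor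
        · have hni : ¬ (∀ B, S.att B a → ∃ b ∈ B, b ∈ I.F) := by
            intro hc
            rw [← (h a ha).1] at hc
            rw [hu] at hc
            exact Lab.noConfusion hc
          push_neg at hni
          obtain ⟨B, hB, hall⟩ := hni
          refine ⟨B, hB, fun b hb hbo => hall b hb ?_⟩
          exact (hMemF b).2 ⟨(hS.1 B a hB).2.1 hb, hbo⟩
        · intro B hB
          have hni : ¬ (∃ B, S.att B a ∧ ↑B ⊆ I.T) := by
            intro hc
            rw [← (h a ha).2] at hc
            rw [hu] at hc
            exact Lab.noConfusion hc
          push_neg at hni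
          obtain ⟨b, hbB, hbni⟩ := Set.not_subset.1 (hni B hB)
          refine ⟨b, Finset.mem_coe.1 hbB, fun hbi => hbni ?_⟩
          exact (hMemT b).2 ⟨(hS.1 B a hB).2.1 (Finset.mem_coe.1 hbB), hbi⟩
  rw [key]
  unfold IsPSModel
  constructor
  · intro h
    refine ⟨hint, interp_eq ?_ ?_⟩
    · rw [hspec.1]
      ext a
      simp only [Set.mem_setOf_eq]
      rw [hitF hS a I.F]
      constructor
      · rintro ⟨ha, hc⟩; exact (hMemT a).2 ⟨ha, ((h a ha).1).2 hc⟩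
      · intro ha
        obtain ⟨ha1, ha2⟩ := (hMemT a).1 ha
        exact ⟨ha1, ((h a ha1).1).1 ha2⟩
    · rw [hspec.2]
      ext a
      simp only [Set.mem_setOf_eq]
      rw [hitT hS a I.T]
      constructor
      · rintro ⟨ha, hc⟩; exact (hMemF a).2 ⟨ha, ((h a ha).2).2 hc⟩
      · intro ha
        obtain ⟨ha1, ha2⟩ := (hMemF a).1 ha
        exact ⟨ha1, ((h a ha1).2).1 ha2⟩
  · rintro ⟨_, heq⟩ a ha
    have hTset : I.T = {c | c ∈ S.args ∧ ∃ V, MemVa S c V ∧ ↑V ⊆ I.F} := by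
      rw [← hspec.1, heq]
    have hFset : I.F = {c | c ∈ S.args ∧ ∀ V, MemVa S c V → ∃ b ∈ V, b ∈ I.T} := by
      rw [← hspec.2, heq]
    constructor
    · constructor
      · intro hin
        have : a ∈ I.T := (hMemT a).2 ⟨ha, hin⟩
        rw [hTset] at this
        exact (hitF hS a I.F).1 this.2
      · intro hc
        have : a ∈ I.T := by
          rw [hTset]
          exact ⟨ha, (hitF hS a I.F).2 hc⟩
        exact ((hMemT a).1 this).2
    · constructor
      · intro hout
        have : a ∈ I.F := (hMemF a).2 ⟨ha, hout⟩
        rw [hFset] at this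
        exact (hitT hS a I.T).1 this.2
      · intro hc
        have : a ∈ I.F := by
          rw [hFset]
          exact ⟨ha, (hitT hS a I.T).2 hc⟩
        exact ((hMemF a).1 this).2

lemma ps_lift {S : SETAF α} (hS : S.Wf) {J : Interp α}
    (hJ : IsPSModel S.args (nlpOf S) J) :
    L2Iset S (I2L J) = J ∧ CompleteLab S (I2L J) := by
  classical
  obtain ⟨⟨hT, hF, hdis⟩, -⟩ := id hJ
  have heq : L2Iset S (I2L J) = J := by
    refine interp_eq ?_ ?_
    · ext a
      simp only [L2Iset, labIn, Set.mem_setOf_eq, I2L]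
      constructor
      · rintro ⟨ha, hl⟩
        by_cases h1 : a ∈ J.T
        · exact h1
        · simp only [h1, if_false] at hl
          by_cases h2 : a ∈ J.F <;> simp [h1, h2] at hl
      · intro h
        exact ⟨hT h, by simp [h]⟩
    · ext a
      simp only [L2Iset, labOut, Set.mem_setOf_eq, I2L]
      constructor
      · rintro ⟨ha, hl⟩
        by_cases h1 : a ∈ J.T
        · simp [h1] at hl
        · by_cases h2 : a ∈ J.F
          · exact h2
          · simp [h1, h2] at hl
      · intro h
        have h1 : a ∉ J.T := Set.disjoint_right.1 hdis h
        exact ⟨hF h, by simp [h1, h]⟩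
  refine ⟨heq, (complete_iff hS (I2L J)).2 ?_⟩
  rw [heq]
  exact hJ

lemma labUnd_eq (S : SETAF α) (L : α → Lab) :
    labUnd S L = ↑S.args \ (labIn S L ∪ labOut S L) := by
  ext a
  cases h : L a <;>
    simp [labUnd, labIn, labOut, h, Set.mem_diff, Set.mem_union]

lemma diff_ssubset {A X X' : Set α} (hX : X ⊆ A) (hX' : X' ⊆ A) :
    A \ X' ⊂ A \ X ↔ X ⊂ X' := by
  have sub : ∀ {Y Y' : Set α}, Y ⊆ A → (A \ Y' ⊆ A \ Y ↔ Y ⊆ Y') := by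
    intro Y Y' hY
    constructor
    · intro h x hx
      by_contra hx'
      exact (h ⟨hY hx, hx'⟩).2 hx
    · rintro h x ⟨hxA, hxY'⟩
      exact ⟨hxA, fun hxY => hxY' (h hxY)⟩
  rw [Set.ssubset_def, Set.ssubset_def, sub hX, sub hX']

end AuxProofs

theorem stmt10 (S : SETAF α) (hS : S.Wf) (L : α → Lab) :
    (GroundedLab S L ↔ IsWFModel S.args (nlpOf S) (L2Iset S L)) ∧
    (PreferredLab S L ↔ IsRegularModel S.args (nlpOf S) (L2Iset S L)) ∧
    (StableLab S L ↔ IsStableModel S.args (nlpOf S) (L2Iset S L)) ∧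
    (SemiStableLab S L ↔ IsLStableModel S.args (nlpOf S) (L2Iset S L)) := by
  have hci := complete_iff hS
  refine ⟨⟨fun hg => ?_, fun hw => ?_⟩, ⟨fun hp => ?_, fun hr => ?_⟩,
    ⟨fun hs => ?_, fun hst => ?_⟩, ⟨fun hss => ?_, fun hls => ?_⟩⟩
  · obtain ⟨hc, hmin⟩ := hg
    refine ⟨(hci L).1 hc, fun J hJ hlt => ?_⟩
    obtain ⟨hJeq, hJc⟩ := ps_lift hS hJ
    refine hmin (I2L J) hJc ?_
    have h1 : labIn S (I2L J) = J.T := congrArg Interp.T hJeq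
    rw [h1]
    exact hlt
  · obtain ⟨hps, hmin⟩ := hw
    refine ⟨(hci L).2 hps, fun L' hL' hlt => ?_⟩
    exact hmin (L2Iset S L') ((hci L').1 hL') hlt
  · obtain ⟨hc, hmin⟩ := hp
    refine ⟨(hci L).1 hc, fun J hJ hlt => ?_⟩
    obtain ⟨hJeq, hJc⟩ := ps_lift hS hJ
    refine hmin (I2L J) hJc ?_
    have h1 : labIn S (I2L J) = J.T := congrArg Interp.T hJeq
    rw [h1]
    exact hlt
  · obtain ⟨hps, hmin⟩ := hr
    refine ⟨(hci L).2 hps, fun L' hL' hlt => ?_⟩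
    exact hmin (L2Iset S L') ((hci L').1 hL') hlt
  · obtain ⟨hc, hund⟩ := hs
    refine ⟨(hci L).1 hc, ?_⟩
    apply Set.Subset.antisymm
    · exact Set.union_subset (interp_L2I S L).1 (interp_L2I S L).2.1
    · intro a ha
      by_contra hna
      have h1 : a ∈ labUnd S L := by
        rw [labUnd_eq]
        exact ⟨ha, hna⟩
      rw [hund] at h1
      exact h1
  · obtain ⟨hps, heq⟩ := hst
    refine ⟨(hci L).2 hps, ?_⟩
    rw [labUnd_eq]
    have h1 : labIn S L ∪ labOut S L = ↑S.args := heq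
    rw [h1, Set.diff_self]
  · obtain ⟨hc, hmin⟩ := hss
    refine ⟨(hci L).1 hc, fun J hJ hlt => ?_⟩
    obtain ⟨hJeq, hJc⟩ := ps_lift hS hJ
    refine hmin (I2L J) hJc ?_
    rw [labUnd_eq, labUnd_eq]
    have h1 : labIn S (I2L J) = J.T := congrArg Interp.T hJeq
    have h2 : labOut S (I2L J) = J.F := congrArg Interp.F hJeq
    rw [h1, h2]
    refine (diff_ssubset ?_ ?_).2 hlt
    · exact Set.union_subset (interp_L2I S L).1 (interp_L2I S L).2.1
    · exact Set.union_subset hJ.1.1 hJ.1.2.1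
  · obtain ⟨hps, hmin⟩ := hls
    refine ⟨(hci L).2 hps, fun L' hL' hlt => ?_⟩
    refine hmin (L2Iset S L') ((hci L').1 hL') ?_
    rw [labUnd_eq, labUnd_eq] at hlt
    exact (diff_ssubset (Set.union_subset (interp_L2I S L).1 (interp_L2I S L).2.1)
      (Set.union_subset (interp_L2I S L').1 (interp_L2I S L').2.1)).1 hlt
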